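/- For every integer d ≥ 1, setting c(d) = ∑_{j=0}^{d} C(d,j)·b(j)/2^{d−j}, there exists a polynomial q with real coefficients such that for every integer n ≥ 0, ∑_{k=0}^{n−1} (k^d − c(d))·4^k·k!/(2k)! = q(n)·4^n·n!/(2n)! − q(0). (Note that 4^k·k!/(2k)! = 1/(1/2)^{(k)}, where a^{(k)} = a(a+1)⋯(a+k−1) is the rising factorial.) -/

import Mathlib

/-!
Write `w k = 4 ^ k * k! / (2k)!`, so that `w (k + 1) = 2 / (2k + 1) * w k`. The sum telescopes as
soon as `q` solves `2 q(x + 1) - (2x + 1) q(x) = (2x + 1) (x ^ d - c(d))`; call the left-hand side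
`T q` (`gosperOp`).

Let `B` (`bellEval`) be the umbral functional `x ^ n ↦ b(n)` on `ℝ[X]`; the Bell recurrence says
exactly that `B (x p) = B (p (x + 1))`, and from it `L p = B (p (x - 1/2))` vanishes on the range
of `T`. Since `x ^ (j + 1) = (x + 1) ^ j - x ^ j / 2 - T (x ^ j) / 2`, the range of `T` together
with the constants is all of `ℝ[X]`, so `p - L p` lies in the range of `T` for every `p`. For
`p = (x + 1) ^ d` we have `L p = B ((x + 1/2) ^ d) = c(d)`, and
`(2x + 1) (x ^ d - c) = 2 ((x + 1) ^ d - c) - T (x ^ d - c)`.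
-/

/-- The Bell numbers: `bell 0 = 1` and `bell (d+1) = ∑_{j=0}^{d} C(d,j) * bell j`. -/
def bell : ℕ → ℕ
  | 0 => 1
  | d + 1 => ∑ j ∈ (Finset.range (d + 1)).attach, Nat.choose d j.1 * bell j.1
  decreasing_by exact Finset.mem_range.mp j.2

open Polynomial Finset
open scoped Nat

lemma bell_succ (n : ℕ) : bell (n + 1) = ∑ j ∈ range (n + 1), n.choose j * bell j := by
  rw [bell]
  exact sum_attach (range (n + 1)) fun j => n.choose j * bell j

section BellEval

variable {R : Type*} [CommSemiring R]

noncomputable def bellEval : R[X] →ₗ[R] R :=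
  lsum fun n => (bell n : R) • LinearMap.id

lemma bellEval_monomial (n : ℕ) (a : R) : bellEval (monomial n a) = a * bell n := by
  simp [bellEval, mul_comm]

lemma bellEval_C (a : R) : bellEval (C a) = a := by
  simp [← monomial_zero_left, bellEval_monomial, bell]

lemma bellEval_X_add_C_pow (a : R) (n : ℕ) :
    bellEval ((X + C a) ^ n) =
      ∑ j ∈ range (n + 1), n.choose j * (bell j : R) * a ^ (n - j) := by
  rw [add_pow, map_sum]
  refine sum_congr rfl fun j _ => ?_
  rw [← C_pow, ← C_eq_natCast, mul_assoc, ← C_mul, X_pow_mul_C, C_mul_X_pow_eq_monomial,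
    bellEval_monomial]
  ring

lemma bellEval_X_mul (p : R[X]) : bellEval (X * p) = bellEval (p.comp (X + 1)) := by
  induction p using Polynomial.induction_on' with
  | add p q hp hq => simp only [mul_add, add_comp, map_add, hp, hq]
  | monomial n a =>
    rw [X_mul_monomial, bellEval_monomial, ← C_mul_X_pow_eq_monomial, mul_comp, C_comp, pow_comp,
      X_comp, ← C_1, ← smul_eq_C_mul, map_smul, bellEval_X_add_C_pow, bell_succ]
    simp [smul_eq_mul]

end BellEval

noncomputable def gosperOp {R : Type*} [CommRing R] : R[X] →ₗ[R] R[X] :=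
  2 • taylor 1 - LinearMap.mulLeft R (2 * X + 1)

lemma gosperOp_apply {R : Type*} [CommRing R] (u : R[X]) :
    gosperOp u = 2 * u.comp (X + 1) - (2 * X + 1) * u := by
  simp [gosperOp, taylor_apply, two_mul]

section GosperOp

variable {K : Type*} [Field K] [NeZero (2 : K)]

lemma C_half_mul_two : C (1 / 2 : K) * 2 = 1 := by
  rw [← C_ofNat, ← C_mul, one_div, inv_mul_cancel₀ two_ne_zero, C_1]

lemma bellEval_gosperOp_comp (u : K[X]) : bellEval ((gosperOp u).comp (X - C (1 / 2))) = 0 := by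
  set v := u.comp (X - C (1 / 2))
  have hshift : (u.comp (X + 1)).comp (X - C (1 / 2)) = v.comp (X + 1) := by
    rw [comp_assoc, comp_assoc, add_comp, sub_comp, X_comp, X_comp, one_comp, C_comp]
    congr 1
    ring
  have hcomp : (gosperOp u).comp (X - C (1 / 2)) = 2 * (v.comp (X + 1) - X * v) := by
    rw [gosperOp_apply, sub_comp, mul_comp, mul_comp, hshift]
    simp only [add_comp, mul_comp, X_comp, one_comp, ofNat_comp]
    linear_combination v * C_half_mul_two (K := K)
  rw [hcomp, ← C_ofNat, ← smul_eq_C_mul, map_smul, map_sub, bellEval_X_mul, sub_self, smul_zero]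

lemma range_gosperOp_sup_one : LinearMap.range (gosperOp (R := K)) ⊔ 1 = ⊤ := by
  set V := LinearMap.range (gosperOp (R := K)) ⊔ 1
  have hX : ∀ j, X ^ j ∈ V := by
    intro j
    induction j using Nat.strong_induction_on with
    | _ j ih =>
      rcases j with _ | j
      · exact Submodule.mem_sup_right (pow_zero (X : K[X]) ▸ Submodule.one_le.mp le_rfl)
      have hbinom : (X + 1) ^ j ∈ V := by
        rw [add_pow]
        refine Submodule.sum_mem _ fun i hi => ?_
        rw [one_pow, mul_one, mul_comm, ← nsmul_eq_mul]
        exact nsmul_mem (ih i (by rw [mem_range] at hi; omega)) _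
      have hstep : (X : K[X]) ^ (j + 1) =
          (X + 1) ^ j - (1 / 2 : K) • X ^ j - (1 / 2 : K) • gosperOp (X ^ j) := by
        rw [gosperOp_apply, smul_eq_C_mul, smul_eq_C_mul]
        simp only [pow_comp, X_comp]
        linear_combination ((X + 1) ^ j - X ^ (j + 1)) * C_half_mul_two (K := K)
      rw [hstep]
      exact sub_mem (sub_mem hbinom (Submodule.smul_mem _ _ (ih j j.lt_succ_self)))
        (Submodule.smul_mem _ _ (Submodule.mem_sup_left ⟨_, rfl⟩))
  refine Submodule.eq_top_iff'.mpr fun p => ?_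
  induction p using Polynomial.induction_on' with
  | add p q hp hq => exact add_mem hp hq
  | monomial n a =>
    rw [← C_mul_X_pow_eq_monomial, ← smul_eq_C_mul]
    exact Submodule.smul_mem _ _ (hX n)

lemma exists_eq_gosperOp_add_C (p : K[X]) : ∃ u a, p = gosperOp u + C a := by
  have hp : p ∈ LinearMap.range gosperOp ⊔ 1 :=
    range_gosperOp_sup_one (K := K) ▸ Submodule.mem_top
  obtain ⟨_, ⟨u, rfl⟩, _, hconst, hsum⟩ := Submodule.mem_sup.mp hp
  obtain ⟨a, rfl⟩ := Submodule.mem_one.mp hconst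
  exact ⟨u, a, hsum.symm⟩

lemma exists_gosperOp_eq (d : ℕ) :
    ∃ q : K[X], gosperOp q = (2 * X + 1) * (X ^ d - C (bellEval ((X + C (1 / 2)) ^ d))) := by
  obtain ⟨u, a, hu⟩ := exists_eq_gosperOp_add_C ((X + 1 : K[X]) ^ d)
  have ha : bellEval ((X + C (1 / 2)) ^ d) = a := by
    have h := congrArg (fun p => bellEval (p.comp (X - C (1 / 2)))) hu
    simp only [add_comp, pow_comp, X_comp, one_comp, C_comp, map_add, bellEval_gosperOp_comp] at h
    rwa [show X - C (1 / 2) + 1 = X + C (1 / 2 : K) by linear_combination -C_half_mul_two (K := K),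
      bellEval_C, zero_add] at h
  refine ⟨2 * u - X ^ d + C a, ?_⟩
  rw [ha, gosperOp_apply]
  rw [gosperOp_apply] at hu
  simp only [add_comp, sub_comp, mul_comp, pow_comp, X_comp, C_comp, ofNat_comp]
  linear_combination -2 * hu

end GosperOp

section CentralWeight

variable {K : Type*} [Field K] [CharZero K]

lemma four_pow_succ_mul_factorial_succ_div (k : ℕ) :
    (4 : K) ^ (k + 1) * ((k + 1)! : K) / ((2 * (k + 1))! : K) =
      2 / (2 * k + 1) * (4 ^ k * (k ! : K) / ((2 * k)! : K)) := by
  rw [show 2 * (k + 1) = 2 * k + 1 + 1 by ring, Nat.factorial_succ, Nat.factorial_succ,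
    Nat.factorial_succ]
  have h0 : ((2 * k)! : K) ≠ 0 := Nat.cast_ne_zero.mpr (Nat.factorial_ne_zero _)
  have h1 : ((2 * k + 1 : ℕ) : K) ≠ 0 := Nat.cast_ne_zero.mpr (Nat.succ_ne_zero _)
  have h2 : ((2 * k + 1 + 1 : ℕ) : K) ≠ 0 := Nat.cast_ne_zero.mpr (Nat.succ_ne_zero _)
  push_cast at h1 h2 ⊢
  rw [div_mul_div_comm, div_eq_div_iff (mul_ne_zero h2 (mul_ne_zero h1 h0)) (mul_ne_zero h1 h0)]
  ring

lemma sum_mul_four_pow_mul_factorial_div_eq (q : K[X]) (f : ℕ → K)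
    (hq : ∀ k : ℕ, 2 * q.eval ((k : K) + 1) - (2 * k + 1) * q.eval (k : K) = (2 * k + 1) * f k)
    (n : ℕ) :
    ∑ k ∈ range n, f k * 4 ^ k * (k ! : K) / ((2 * k)! : K) =
      q.eval (n : K) * 4 ^ n * (n ! : K) / ((2 * n)! : K) - q.eval 0 := by
  have hterm : ∀ k ∈ range n, f k * 4 ^ k * (k ! : K) / ((2 * k)! : K) =
      q.eval ((k + 1 : ℕ) : K) * 4 ^ (k + 1) * ((k + 1)! : K) / ((2 * (k + 1))! : K) -
        q.eval (k : K) * 4 ^ k * (k ! : K) / ((2 * k)! : K) := by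
    intro k _
    set w : K := 4 ^ k * (k ! : K) / ((2 * k)! : K)
    have h1 : (2 * k + 1 : K) ≠ 0 := by exact_mod_cast Nat.succ_ne_zero (2 * k)
    calc f k * 4 ^ k * (k ! : K) / ((2 * k)! : K)
        = w * ((2 * k + 1) * f k / (2 * k + 1)) := by rw [mul_div_cancel_left₀ _ h1]; ring
      _ = w * ((2 * q.eval ((k : K) + 1) - (2 * k + 1) * q.eval (k : K)) / (2 * k + 1)) := by
        rw [hq k]
      _ = q.eval ((k : K) + 1) * (2 / (2 * k + 1) * w) - q.eval (k : K) * w := by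
        rw [sub_div, mul_div_cancel_left₀ _ h1]; ring
      _ = _ := by rw [← four_pow_succ_mul_factorial_succ_div]; push_cast; ring
  rw [sum_congr rfl hterm,
    sum_range_sub fun k => q.eval (k : K) * 4 ^ k * (k ! : K) / ((2 * k)! : K)]
  simp

end CentralWeight

theorem stmt_19_general (d : ℕ) :
    ∃ q : Polynomial ℝ, ∀ n : ℕ,
      ∑ k ∈ Finset.range n,
          (((k : ℝ) ^ d -
              ∑ j ∈ Finset.range (d + 1),
                (Nat.choose d j : ℝ) * (bell j : ℝ) / 2 ^ (d - j)) *
            4 ^ k * (Nat.factorial k : ℝ) / (Nat.factorial (2 * k) : ℝ)) =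
        q.eval (n : ℝ) * 4 ^ n * (Nat.factorial n : ℝ) / (Nat.factorial (2 * n) : ℝ) -
          q.eval 0 := by
  obtain ⟨q, hq⟩ := exists_gosperOp_eq (K := ℝ) d
  have hc : ∑ j ∈ range (d + 1), (d.choose j : ℝ) * (bell j : ℝ) / 2 ^ (d - j) =
      bellEval ((X + C (1 / 2)) ^ d) := by
    rw [bellEval_X_add_C_pow]
    exact sum_congr rfl fun j _ => by rw [one_div_pow, mul_one_div]
  refine ⟨q, fun n => ?_⟩
  rw [hc]
  refine sum_mul_four_pow_mul_factorial_div_eq q _ (fun k => ?_) n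
  simpa [gosperOp_apply] using congrArg (eval (k : ℝ)) hq

theorem stmt_19 (d : ℕ) (hd : 1 ≤ d) :
    ∃ q : Polynomial ℝ, ∀ n : ℕ,
      ∑ k ∈ Finset.range n,
          (((k : ℝ) ^ d -
              ∑ j ∈ Finset.range (d + 1),
                (Nat.choose d j : ℝ) * (bell j : ℝ) / 2 ^ (d - j)) *
            4 ^ k * (Nat.factorial k : ℝ) / (Nat.factorial (2 * k) : ℝ)) =
        q.eval (n : ℝ) * 4 ^ n * (Nat.factorial n : ℝ) / (Nat.factorial (2 * n) : ℝ) -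
          q.eval 0 :=
  stmt_19_general d
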